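/- arXiv:2310.11019 — 2 statements merged into one kernel-verified Lean document; each statement's English description precedes it below -/
import Mathlib

section
/- Let r ≥ 1 be an integer and a < b be real numbers, and let x ∈ [a,b]. Then there exists a constant C ≥ 0 such that for every function f : ℝ → ℝ and every g ∈ L²([a,b]) with the property that f is (r−1)-times differentiable on [a,b] and its (r−1)-st derivative satisfies f^{(r−1)}(t) = f^{(r−1)}(a) + ∫_a^t g(s) ds for all t ∈ [a,b], one has |f(x)| ≤ C · ( Σ_{i=0}^{r−1} (f^{(i)}(a))² + ∫_a^b g(s)² ds )^{1/2}. (That is, point evaluation is a bounded linear functional on the space W₂^r[a,b], which is the key content of the claim that W₂^r[a,b] is a reproducing kernel Hilbert space.) -/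
/-! By Cauchy–Schwarz, `f^{(r-1)} = f^{(r-1)}(a) + ∫_a^· g` is bounded on `[a,b]` by
`|f^{(r-1)}(a)| + √(b-a) ‖g‖₂`. Going down, the mean value inequality bounds each `f^{(i)}` on
`[a,b]` by `|f^{(i)}(a)| + (b-a) sup |f^{(i+1)}|`. All the initial values and `‖g‖₂` are bounded by
the `W₂^r` norm, so `|f x| ≤ (1 + (b-a))^{r-1} (1 + √(b-a)) ‖f‖`. -/

open MeasureTheory Set

lemma integral_abs_le_sqrt_measureReal_mul_sqrt {α : Type*} [MeasurableSpace α] {μ : Measure α}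
    [IsFiniteMeasure μ] {g : α → ℝ} (hg : MemLp g 2 μ) :
    ∫ u, |g u| ∂μ ≤ √(μ.real univ) * √(∫ u, g u ^ 2 ∂μ) := by
  have two : ENNReal.ofReal 2 = 2 := by norm_num
  have holder := integral_mul_norm_le_Lp_mul_Lq Real.HolderConjugate.two_two
    (f := fun _ ↦ (1 : ℝ)) (by rw [two]; exact memLp_const (μ := μ) 1) (by rw [two]; exact hg)
  simpa [Real.sqrt_eq_rpow] using holder

lemma abs_intervalIntegral_le_sqrt_mul_sqrt {a b t : ℝ} (ht : t ∈ Icc a b) {g : ℝ → ℝ}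
    (hg : MemLp g 2 (volume.restrict (Icc a b))) :
    |∫ s in a..t, g s| ≤ √(b - a) * √(∫ s in a..b, g s ^ 2) := by
  have hab : a ≤ b := ht.1.trans ht.2
  calc |∫ s in a..t, g s| ≤ ∫ s in Ioc a t, |g s| := by
        rw [intervalIntegral.integral_of_le ht.1]
        exact abs_integral_le_integral_abs
    _ ≤ ∫ s in Icc a b, |g s| :=
        setIntegral_mono_set (hg.integrable one_le_two).abs (.of_forall fun _ ↦ abs_nonneg _)
          (.of_forall (Ioc_subset_Icc_self.trans (Icc_subset_Icc_right ht.2)))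
    _ ≤ √(b - a) * √(∫ s in a..b, g s ^ 2) := by
        simpa [hab, intervalIntegral.integral_of_le, integral_Icc_eq_integral_Ioc]
          using integral_abs_le_sqrt_measureReal_mul_sqrt hg

lemma abs_le_pow_mul_of_hasDerivWithinAt_chain {a b M : ℝ} {n : ℕ} {d : ℕ → ℝ → ℝ}
    (hd : ∀ i < n, ∀ t ∈ Icc a b, HasDerivWithinAt (d i) (d (i + 1) t) (Icc a b) t)
    (hinit : ∀ i < n, |d i a| ≤ M) (htop : ∀ t ∈ Icc a b, |d n t| ≤ M) :
    ∀ i ≤ n, ∀ t ∈ Icc a b, |d i t| ≤ (1 + (b - a)) ^ (n - i) * M := by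
  intro i hi
  induction hi using Nat.decreasingInduction with
  | self => simpa using htop
  | of_succ i hi ih =>
    intro t ht
    have hab : a ≤ b := ht.1.trans ht.2
    have hM : 0 ≤ M := (abs_nonneg _).trans (htop a (left_mem_Icc.2 hab))
    have hpow : 1 ≤ (1 + (b - a)) ^ (n - (i + 1)) := one_le_pow₀ (by linarith)
    have hmvt : |d i t - d i a| ≤ (1 + (b - a)) ^ (n - (i + 1)) * M * (t - a) :=
      norm_image_sub_le_of_norm_deriv_le_segment' (hd i hi)
        (fun u hu ↦ ih u (Ico_subset_Icc_self hu)) t ht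
    rw [show n - i = n - (i + 1) + 1 by omega, pow_succ]
    calc |d i t| ≤ |d i a| + |d i t - d i a| := by
          linarith [abs_sub_abs_le_abs_sub (d i t) (d i a)]
      _ ≤ M + (1 + (b - a)) ^ (n - (i + 1)) * M * (b - a) := by
          gcongr
          · exact hinit i hi
          · exact hmvt.trans (by gcongr; exact ht.2)
      _ ≤ (1 + (b - a)) ^ (n - (i + 1)) * (1 + (b - a)) * M := by nlinarith

theorem stmt0_general (r : ℕ) (hr : 1 ≤ r) (a b : ℝ) (x : ℝ)
    (hx : x ∈ Set.Icc a b) :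
    ∃ C : ℝ, 0 ≤ C ∧ ∀ (f g : ℝ → ℝ),
      (∀ i < r - 1, ∀ t ∈ Set.Icc a b,
        HasDerivWithinAt (iteratedDerivWithin i f (Set.Icc a b))
          (iteratedDerivWithin (i + 1) f (Set.Icc a b) t) (Set.Icc a b) t) →
      MemLp g 2 (volume.restrict (Set.Icc a b)) →
      (∀ t ∈ Set.Icc a b,
        iteratedDerivWithin (r - 1) f (Set.Icc a b) t
          = iteratedDerivWithin (r - 1) f (Set.Icc a b) a + ∫ s in a..t, g s) →
      |f x| ≤ C * Real.sqrt
        ((∑ i ∈ Finset.range r, (iteratedDerivWithin i f (Set.Icc a b) a) ^ 2)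
          + ∫ s in a..b, (g s) ^ 2) := by
  have hab : a ≤ b := hx.1.trans hx.2
  refine ⟨(1 + (b - a)) ^ (r - 1) * (1 + √(b - a)), by positivity, ?_⟩
  intro f g hderiv hg hftc
  set d := fun i ↦ iteratedDerivWithin i f (Icc a b)
  set N := √((∑ i ∈ Finset.range r, d i a ^ 2) + ∫ s in a..b, g s ^ 2)
  have hsum : 0 ≤ ∑ i ∈ Finset.range r, d i a ^ 2 := Finset.sum_nonneg fun _ _ ↦ sq_nonneg _
  have hinit : ∀ i < r, |d i a| ≤ N := fun i hi ↦ Real.abs_le_sqrt <|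
    (Finset.single_le_sum (f := fun j ↦ d j a ^ 2) (fun _ _ ↦ sq_nonneg _)
      (Finset.mem_range.2 hi)).trans
      (le_add_of_nonneg_right (intervalIntegral.integral_nonneg hab fun _ _ ↦ sq_nonneg _))
  have hL2 : √(∫ s in a..b, g s ^ 2) ≤ N := Real.sqrt_le_sqrt (le_add_of_nonneg_left hsum)
  have htop : ∀ t ∈ Icc a b, |d (r - 1) t| ≤ (1 + √(b - a)) * N := fun t ht ↦
    calc |d (r - 1) t| ≤ |d (r - 1) a| + |∫ s in a..t, g s| :=
          (congrArg abs (hftc t ht)).trans_le (abs_add_le _ _)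
      _ ≤ N + √(b - a) * N := by
          gcongr
          · exact hinit _ (by omega)
          · exact (abs_intervalIntegral_le_sqrt_mul_sqrt ht hg).trans (by gcongr)
      _ = (1 + √(b - a)) * N := by ring
  have hchain := abs_le_pow_mul_of_hasDerivWithinAt_chain hderiv
    (fun i hi ↦ (hinit i (by omega)).trans (le_mul_of_one_le_left (Real.sqrt_nonneg _)
      (le_add_of_nonneg_right (Real.sqrt_nonneg _)))) htop 0 (Nat.zero_le _) x hx
  simpa [d, mul_assoc] using hchain

/-- Point evaluation is a bounded linear functional on `W₂^r[a,b]`: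
for `r ≥ 1`, `a < b`, `x ∈ [a,b]`, there is a constant `C ≥ 0` such that for
every `f` that is `(r-1)`-times differentiable on `[a,b]` whose `(r-1)`-st
derivative is absolutely continuous with a.e. derivative `g ∈ L²[a,b]`, one has
`|f x| ≤ C * (∑_{i<r} f^{(i)}(a)² + ∫_a^b g²)^{1/2}`. -/
theorem stmt0 (r : ℕ) (hr : 1 ≤ r) (a b : ℝ) (hab : a < b) (x : ℝ)
    (hx : x ∈ Set.Icc a b) :
    ∃ C : ℝ, 0 ≤ C ∧ ∀ (f g : ℝ → ℝ),
      (∀ i < r - 1, ∀ t ∈ Set.Icc a b,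
        HasDerivWithinAt (iteratedDerivWithin i f (Set.Icc a b))
          (iteratedDerivWithin (i + 1) f (Set.Icc a b) t) (Set.Icc a b) t) →
      MemLp g 2 (volume.restrict (Set.Icc a b)) →
      (∀ t ∈ Set.Icc a b,
        iteratedDerivWithin (r - 1) f (Set.Icc a b) t
          = iteratedDerivWithin (r - 1) f (Set.Icc a b) a + ∫ s in a..t, g s) →
      |f x| ≤ C * Real.sqrt
        ((∑ i ∈ Finset.range r, (iteratedDerivWithin i f (Set.Icc a b) a) ^ 2)
          + ∫ s in a..b, (g s) ^ 2) :=
  stmt0_general r hr a b x hx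
end

section
/- Let H and H′ be real Hilbert spaces, L : H → H′ an injective continuous linear map with adjoint L* : H′ → H, X a topological space, and k : X → H′ a continuous map such that the closed linear span of { k x : x ∈ X } is all of H′. Let (x_i)_{i∈ℕ} be a sequence in X whose range is dense in X, and set ψ_i = L*(k x_i). Then the system {ψ_i}_{i∈ℕ} is complete in H, i.e. the closed linear span of { ψ_i : i ∈ ℕ } equals H. (Abstract form of Theorem 1.) -/
/-!
The closed span of the `ψᵢ` is all of `H` iff nothing nonzero is orthogonal to every `ψᵢ`.
Since `⟪L* (k y), h⟫ = ⟪k y, L h⟫`, the point is that the `k xᵢ` already have dense span in `H'`: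
the closure of their span is a closed subspace, its preimage under the continuous `k` is closed
and contains the dense set `{xᵢ}`, so it contains every `k y`. Hence `h ⊥ ψᵢ` for all `i` forces
`L h ⊥ H'`, so `L h = 0` and `h = 0` by injectivity.
-/

open Submodule Set

theorem Submodule.mem_orthogonal_span_iff {𝕜 E : Type*} [RCLike 𝕜] [NormedAddCommGroup E]
    [InnerProductSpace 𝕜 E] {s : Set E} {w : E} :
    w ∈ (span 𝕜 s)ᗮ ↔ ∀ u ∈ s, inner 𝕜 u w = 0 := by
  rw [← span_singleton_le_iff_mem, ← isOrtho_iff_le, isOrtho_comm, isOrtho_span]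
  simp

theorem Submodule.topologicalClosure_span_range_comp_eq_top {R M X ι : Type*} [Semiring R]
    [AddCommMonoid M] [Module R M] [TopologicalSpace M] [ContinuousAdd M] [ContinuousConstSMul R M]
    [TopologicalSpace X] {k : X → M} (hk : Continuous k) {x : ι → X} (hx : DenseRange x)
    (hspan : (span R (range k)).topologicalClosure = ⊤) :
    (span R (range (k ∘ x))).topologicalClosure = ⊤ := by
  set K := span R (range (k ∘ x))
  have hrange : range k ⊆ K.topologicalClosure := by
    rintro _ ⟨y, rfl⟩
    refine hx.induction_on y (K.isClosed_topologicalClosure.preimage hk) fun i => ?_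
    exact K.le_topologicalClosure (subset_span (mem_range_self i))
  rw [eq_top_iff, ← hspan]
  exact topologicalClosure_minimal _ (span_le.mpr hrange) K.isClosed_topologicalClosure

theorem topologicalClosure_span_range_adjoint_comp_eq_top {𝕜 E F ι : Type*} [RCLike 𝕜]
    [NormedAddCommGroup E] [InnerProductSpace 𝕜 E] [CompleteSpace E]
    [NormedAddCommGroup F] [InnerProductSpace 𝕜 F] [CompleteSpace F]
    {L : E →L[𝕜] F} (hL : Function.Injective L) {v : ι → F}
    (hv : (span 𝕜 (range v)).topologicalClosure = ⊤) :
    (span 𝕜 (range (ContinuousLinearMap.adjoint L ∘ v))).topologicalClosure = ⊤ := by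
  rw [topologicalClosure_eq_top_iff, eq_bot_iff] at hv ⊢
  intro h hh
  have hLh : L h ∈ (span 𝕜 (range v))ᗮ := by
    simp only [mem_orthogonal_span_iff, forall_mem_range, Function.comp_apply,
      ContinuousLinearMap.adjoint_inner_left] at hh ⊢
    exact hh
  exact hL (by simpa using hv hLh)

/-- Abstract form of Theorem 1: if `L : H → H'` is an injective bounded linear
map between real Hilbert spaces, `k : X → H'` a continuous feature map with
dense span, and `(xᵢ)` a sequence with dense range in `X`, then the system
`ψᵢ = L*(k xᵢ)` is complete in `H`. -/
theorem stmt8 {H : Type*} [NormedAddCommGroup H] [InnerProductSpace ℝ H]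
    [CompleteSpace H]
    {H' : Type*} [NormedAddCommGroup H'] [InnerProductSpace ℝ H']
    [CompleteSpace H']
    (L : H →L[ℝ] H') (hL : Function.Injective L)
    {X : Type*} [TopologicalSpace X] (k : X → H') (hk : Continuous k)
    (hspan : (Submodule.span ℝ (Set.range k)).topologicalClosure = ⊤)
    (x : ℕ → X) (hx : Dense (Set.range x)) :
    (Submodule.span ℝ
        (Set.range fun i => ContinuousLinearMap.adjoint L (k (x i)))
      ).topologicalClosure = ⊤ :=
  topologicalClosure_span_range_adjoint_comp_eq_top hL
    (topologicalClosure_span_range_comp_eq_top hk hx hspan)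
end
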